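/- arXiv:2504.10233 — 2 statements merged into one kernel-verified Lean document; each statement's English description precedes it below -/
import Mathlib

section
/- Correctness of hierarchical sampling: with P(p_k) = W(p_k) / ∑_{j=0}^{K-1} W(p_j) and P(v_i | p_k) = (w_i AND 2^k) / W(p_k) (interpreted as 0 when W(p_k) = 0), the law of total probability gives P(v_i) = ∑_{k=0}^{K-1} P(p_k) · P(v_i | p_k) = w_i / ∑_{j=0}^{d-1} w_j. That is, the probability of selecting each neighbor under radix-based two-stage sampling equals its original transition probability. -/
/-! The bits `w &&& 2 ^ k`, `k < K`, of a `K`-bit number `w` add up to `w`. Hence the radix weights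
`W k` add up to `∑ j, w j`, and in the total-probability sum the factor `W k` cancels, leaving
`∑ k, (w i &&& 2 ^ k) / ∑ j, w j = w i / ∑ j, w j`. When `W k = 0` both stages are `0`, but then so
is every bit `w i &&& 2 ^ k`, so the cancellation holds in that case too. -/

open Finset

theorem Nat.sum_range_and_two_pow (n K : ℕ) :
    ∑ k ∈ range K, (n &&& 2 ^ k) = n % 2 ^ K := by
  induction K with
  | zero => simp [Nat.mod_one]
  | succ K ih =>
    rw [sum_range_succ, ih, Nat.and_two_pow, Nat.testBit_eq_decide_div_mod_eq, pow_succ,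
      Nat.mod_mul]
    rcases Nat.mod_two_eq_zero_or_one (n / 2 ^ K) with h | h <;> simp [h]

theorem Nat.sum_range_and_two_pow_of_lt {n K : ℕ} (h : n < 2 ^ K) :
    ∑ k ∈ range K, (n &&& 2 ^ k) = n := by
  rw [Nat.sum_range_and_two_pow, Nat.mod_eq_of_lt h]

theorem Finset.sum_div_mul_div_cancel {κ F : Type*} [Semifield F] (s : Finset κ) (S : F)
    (W a : κ → F) (ha : ∀ k ∈ s, W k = 0 → a k = 0) :
    ∑ k ∈ s, W k / S * (a k / W k) = (∑ k ∈ s, a k) / S := by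
  rw [sum_div]
  refine sum_congr rfl fun k hk => ?_
  by_cases hW : W k = 0
  · simp [hW, ha k hk hW]
  · exact div_mul_div_cancel₀' hW S (a k)

theorem hierarchical_sampling_correct_general (d K : ℕ)
    (w : Fin d → ℕ) (hw : ∀ i, w i < 2 ^ K)
    (W : ℕ → ℚ) (hW : ∀ k, W k = ∑ i, ((w i &&& 2 ^ k : ℕ) : ℚ)) (i : Fin d) :
    ∑ k ∈ Finset.range K,
        (W k / ∑ j ∈ Finset.range K, W j) * (((w i &&& 2 ^ k : ℕ) : ℚ) / W k)
      = (w i : ℚ) / ((∑ j, w j : ℕ) : ℚ) := by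
  have hW_nat : ∀ k, W k = ((∑ j, (w j &&& 2 ^ k) : ℕ) : ℚ) := fun k => by
    rw [hW, Nat.cast_sum]
  have bit_eq_zero : ∀ k, W k = 0 → ((w i &&& 2 ^ k : ℕ) : ℚ) = 0 := by
    intro k hk
    rw [hW_nat, Nat.cast_eq_zero, sum_eq_zero_iff] at hk
    exact_mod_cast hk i (mem_univ i)
  have total : ∑ k ∈ range K, W k = ((∑ j, w j : ℕ) : ℚ) := by
    simp only [hW_nat, ← Nat.cast_sum]
    rw [sum_comm]
    exact congrArg _ (sum_congr rfl fun j _ => Nat.sum_range_and_two_pow_of_lt (hw j))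
  rw [sum_div_mul_div_cancel _ _ _ _ fun k _ => bit_eq_zero k, total, ← Nat.cast_sum,
    Nat.sum_range_and_two_pow_of_lt (hw i)]

/-- Correctness of hierarchical sampling: with `P(p_k) = W(p_k) / ∑_j W(p_j)` and
`P(v_i | p_k) = (w_i &&& 2^k) / W(p_k)` (division by zero is 0 in ℚ), the law of
total probability gives `P(v_i) = ∑_k P(p_k) · P(v_i | p_k) = w_i / ∑_j w_j`. -/
theorem hierarchical_sampling_correct (d K : ℕ) (hd : 0 < d) (hK : 0 < K)
    (w : Fin d → ℕ) (hw : ∀ i, w i < 2 ^ K) (hpos : 0 < ∑ i, w i)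
    (W : ℕ → ℚ) (hW : ∀ k, W k = ∑ i, ((w i &&& 2 ^ k : ℕ) : ℚ)) (i : Fin d) :
    ∑ k ∈ Finset.range K,
        (W k / ∑ j ∈ Finset.range K, W j) * (((w i &&& 2 ^ k : ℕ) : ℚ) / W k)
      = (w i : ℚ) / ((∑ j, w j : ℕ) : ℚ) :=
  hierarchical_sampling_correct_general d K w hw W hW i
end

section
/- Two-phase parallel delete-and-swap correctness: let L be a list of length n and S a set of N distinct positions to delete, with N ≤ n. Let T be the last N positions of L and γ = |S ∩ T|. Then |S \ T| = N − γ, and the N − γ elements among the last N positions not in S suffice to fill the N − γ deleted positions outside the tail; in particular, the resulting list of length n − N contains exactly the multiset of elements of L at positions not in S. -/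
/-- Two-phase parallel delete-and-swap correctness: for a list `L` of length `n`,
a set `S` of `N ≤ n` positions to delete, `T` the last `N` positions and
`γ = |S ∩ T|`, we have `|S \ T| = N - γ = |T \ S|`; the `N - γ` surviving tail
elements fill the `N - γ` deleted non-tail positions, and the resulting list has
length `n - N` and contains exactly the multiset of elements of `L` at positions
not in `S`. -/
theorem two_phase_delete_and_swap {α : Type*} [Inhabited α] (L : List α) (n N : ℕ)
    (hn : L.length = n) (hN : N ≤ n) (S : Finset ℕ) (hSsub : ∀ i ∈ S, i < n)
    (hScard : S.card = N) (T : Finset ℕ) (hT : T = Finset.Ico (n - N) n)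
    (γ : ℕ) (hγ : γ = (S ∩ T).card)
    (fillers holes : List ℕ)
    (hfillers : fillers = (T \ S).sort (· ≤ ·))
    (hholes : holes = (S \ T).sort (· ≤ ·))
    (result : List α)
    (hresult : result = (List.range (n - N)).map (fun i =>
      if i ∈ S then L.getD (fillers.getD (holes.idxOf i) 0) default
      else L.getD i default)) :
    (S \ T).card = N - γ
    ∧ (T \ S).card = N - γ
    ∧ result.length = n - N
    ∧ (result : Multiset α)
        = ((Finset.range n \ S).val.map (fun i => L.getD i default)) := by
  have hTcard : T.card = N := by subst hT; rw [Nat.card_Ico]; omega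
  have hST : (S \ T).card = N - γ := by
    have := Finset.card_sdiff_add_card_inter S T
    omega
  have hTS : (T \ S).card = N - γ := by
    have := Finset.card_sdiff_add_card_inter T S
    rw [Finset.inter_comm] at this
    omega
  have hlenh : holes.length = N - γ := by rw [hholes, Finset.length_sort, hST]
  have hlenf : fillers.length = N - γ := by rw [hfillers, Finset.length_sort, hTS]
  have hholes_mem : ∀ i, i ∈ holes ↔ i ∈ S \ T := by
    intro i; rw [hholes, Finset.mem_sort]
  have hfillers_mem : ∀ i, i ∈ fillers ↔ i ∈ T \ S := by
    intro i; rw [hfillers, Finset.mem_sort]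
  have hhnd : holes.Nodup := by rw [hholes]; exact Finset.sort_nodup _ _
  have hfnd : fillers.Nodup := by rw [hfillers]; exact Finset.sort_nodup _ _
  -- the combined index map
  set h : ℕ → ℕ := fun i => if i ∈ S then fillers.getD (holes.idxOf i) 0 else i with hh
  have hmemST : ∀ i, i < n - N → i ∈ S → i ∈ S \ T := by
    intro i hi hiS
    rw [Finset.mem_sdiff, hT, Finset.mem_Ico]
    exact ⟨hiS, by omega⟩
  have hfill : ∀ i, i < n - N → i ∈ S → h i ∈ T \ S := by
    intro i hi hiS
    have hmem : i ∈ holes := (hholes_mem i).2 (hmemST i hi hiS)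
    have hidx : holes.idxOf i < holes.length := List.idxOf_lt_length_iff.2 hmem
    have hidx' : holes.idxOf i < fillers.length := by omega
    simp only [hh, if_pos hiS]
    rw [List.getD_eq_getElem _ _ hidx']
    exact (hfillers_mem _).1 (List.getElem_mem _)
  have hinj : Set.InjOn h (Finset.range (n - N)) := by
    intro i hi j hj hij
    simp only [Finset.coe_range, Set.mem_Iio] at hi hj
    by_cases hiS : i ∈ S <;> by_cases hjS : j ∈ S
    · have h1 : i ∈ holes := (hholes_mem i).2 (hmemST i hi hiS)
      have h2 : j ∈ holes := (hholes_mem j).2 (hmemST j hj hjS)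
      have hi1 : holes.idxOf i < holes.length := List.idxOf_lt_length_iff.2 h1
      have hj1 : holes.idxOf j < holes.length := List.idxOf_lt_length_iff.2 h2
      have hi2 : holes.idxOf i < fillers.length := by omega
      have hj2 : holes.idxOf j < fillers.length := by omega
      simp only [hh, if_pos hiS, if_pos hjS, List.getD_eq_getElem _ _ hi2,
        List.getD_eq_getElem _ _ hj2] at hij
      have : holes.idxOf i = holes.idxOf j := by
        have := (hfnd.get_inj_iff (i := ⟨_, hi2⟩) (j := ⟨_, hj2⟩)).1 hij
        exact congrArg Fin.val this
      calc i = holes.get ⟨holes.idxOf i, hi1⟩ := (List.idxOf_get hi1).symm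
        _ = holes.get ⟨holes.idxOf j, hj1⟩ := by simp [this]
        _ = j := List.idxOf_get hj1
    · exfalso
      have := hfill i hi hiS
      rw [hij] at this
      simp only [hh, if_neg hjS] at this
      rw [Finset.mem_sdiff, hT, Finset.mem_Ico] at this
      omega
    · exfalso
      have := hfill j hj hjS
      rw [← hij] at this
      simp only [hh, if_neg hiS] at this
      rw [Finset.mem_sdiff, hT, Finset.mem_Ico] at this
      omega
    · simpa only [hh, if_neg hiS, if_neg hjS] using hij
  have himg : (Finset.range (n - N)).image h = Finset.range n \ S := by
    apply Finset.eq_of_subset_of_card_le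
    · intro y hy
      rw [Finset.mem_image] at hy
      obtain ⟨i, hi, rfl⟩ := hy
      rw [Finset.mem_range] at hi
      by_cases hiS : i ∈ S
      · have := hfill i hi hiS
        rw [Finset.mem_sdiff, hT, Finset.mem_Ico] at this
        rw [Finset.mem_sdiff, Finset.mem_range]
        exact ⟨by omega, this.2⟩
      · simp only [hh, if_neg hiS]
        rw [Finset.mem_sdiff, Finset.mem_range]
        exact ⟨by omega, hiS⟩
    · rw [Finset.card_sdiff_of_subset (fun i hi => Finset.mem_range.2 (hSsub i hi)),
        Finset.card_range, hScard, Finset.card_image_of_injOn hinj, Finset.card_range]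
  refine ⟨hST, hTS, by simp [hresult], ?_⟩
  have hval : (Finset.range n \ S).val = (Multiset.range (n - N)).map h := by
    rw [← himg, Finset.image_val_of_injOn hinj, Finset.range_val]
  rw [hval, hresult, Multiset.map_map]
  rw [show Multiset.range (n - N) = (↑(List.range (n - N)) : Multiset ℕ) from rfl,
    Multiset.map_coe]
  congr 1
  apply List.map_congr_left
  intro i _
  simp only [Function.comp, hh, apply_ite (fun j => L.getD j default)]
end
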